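/- arXiv:2406.04023 — 3 statements merged into one kernel-verified Lean document; each statement's English description precedes it below -/
import Mathlib

section
/- Let n ≥ 3 and let (X, w) be a fully symmetric finite weighted set in ℝ^n \ {0}, with positive weights. Then (X, w) is a Euclidean 3-design. -/
open MeasureTheory Metric
open scoped Classical

noncomputable section

/-- The average of `f` over the sphere of radius `r` centered at the origin in `ℝⁿ`,
with respect to the `(n-1)`-dimensional surface (Hausdorff) measure. -/
def sphereAvg (n : ℕ) (r : ℝ) (f : EuclideanSpace ℝ (Fin n) → ℝ) : ℝ :=
  ⨍ x in sphere (0 : EuclideanSpace ℝ (Fin n)) r, f x ∂(μH[(n : ℝ) - 1])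

/-- `(X, w)` is a Euclidean `t`-design in `ℝⁿ`: for every polynomial `f` of total degree
at most `t`, the weighted sum of the spherical averages of `f` over the spheres through the
layers of `X` equals the weighted sum of the values of `f` on `X`. -/
def IsEuclideanDesign (n : ℕ) (X : Finset (EuclideanSpace ℝ (Fin n)))
    (w : EuclideanSpace ℝ (Fin n) → ℝ) (t : ℕ) : Prop :=
  ∀ f : MvPolynomial (Fin n) ℝ, f.totalDegree ≤ t →
    ∑ r ∈ X.image (fun x => ‖x‖),
      (∑ x ∈ X.filter (fun x => ‖x‖ = r), w x) *
        sphereAvg n r (fun x => MvPolynomial.eval (fun i => x i) f)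
    = ∑ x ∈ X, w x * MvPolynomial.eval (fun i => x i) f

/-- The signed permutation of coordinates determined by `g` and signs `ε`. -/
def signedPerm (n : ℕ) (g : Equiv.Perm (Fin n)) (ε : Fin n → Bool)
    (x : EuclideanSpace ℝ (Fin n)) : EuclideanSpace ℝ (Fin n) :=
  WithLp.toLp 2 fun i => (if ε i then -1 else 1) * x (g i)

/-- `(X, w)` is fully symmetric: `X` is invariant under all coordinate permutations and
sign changes, and `w` is invariant as well. -/
def FullySymmetric (n : ℕ) (X : Finset (EuclideanSpace ℝ (Fin n)))
    (w : EuclideanSpace ℝ (Fin n) → ℝ) : Prop :=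
  ∀ g : Equiv.Perm (Fin n), ∀ ε : Fin n → Bool, ∀ x ∈ X,
    signedPerm n g ε x ∈ X ∧ w (signedPerm n g ε x) = w x

/-- The generalized regular hyperoctahedron `I^n_k`: vectors with entries in `{-1,0,1}`
having exactly `k` nonzero coordinates. -/
def hyperOct (n k : ℕ) : Finset (EuclideanSpace ℝ (Fin n)) :=
  ((Fintype.piFinset fun _ : Fin n => ({-1, 0, 1} : Finset ℝ)).image (WithLp.toLp 2)).filter
    (fun x => (Finset.univ.filter fun i => x i ≠ 0).card = k)

/-- The layer `(r/√k) · I^n_k`. -/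
def scaledOct (n k : ℕ) (r : ℝ) : Finset (EuclideanSpace ℝ (Fin n)) :=
  (hyperOct n k).image fun x => (r / Real.sqrt k) • x

/-- The union `X(J) = ⋃_{k ∈ J} (r_k/√k) · I^n_k`. -/
def octUnion (n : ℕ) (J : Finset ℕ) (r : ℕ → ℝ) : Finset (EuclideanSpace ℝ (Fin n)) :=
  J.biUnion fun k => scaledOct n k (r k)

/-- The weight function which is the constant `wt k` on the layer `(r_k/√k) · I^n_k`. -/
def octWeight (n : ℕ) (J : Finset ℕ) (r : ℕ → ℝ) (wt : ℕ → ℝ) :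
    EuclideanSpace ℝ (Fin n) → ℝ :=
  fun x => ∑ k ∈ J, if x ∈ scaledOct n k (r k) then wt k else 0

/-- `G(k₁,k₂) = (n+2-3k₁)(n+2-3k₂) + 6(k₁-1)(k₂-1) + 2(n-1)`. -/
def Gfun (n k₁ k₂ : ℤ) : ℤ :=
  (n + 2 - 3 * k₁) * (n + 2 - 3 * k₂) + 6 * (k₁ - 1) * (k₂ - 1) + 2 * (n - 1)

/-- `p_k = k(1 - 3(k-1)/(n-1))`. -/
def pfun (n k : ℚ) : ℚ := k * (1 - 3 * (k - 1) / (n - 1))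

/-- `q_k = 3(1 - 15(k-1)/(n-1) + 30(k-1)(k-2)/((n-1)(n-2)))`. -/
def qfun (n k : ℚ) : ℚ :=
  3 * (1 - 15 * (k - 1) / (n - 1) + 30 * (k - 1) * (k - 2) / ((n - 1) * (n - 2)))

/-- `f_{4,2}`. -/
def f42 (a b : ℝ) : ℝ := a ^ 4 - 6 * a ^ 2 * b ^ 2 + b ^ 4

/-- `f_{6,3}`. -/
def f63 (a b c : ℝ) : ℝ :=
  2 * (a ^ 6 + b ^ 6 + c ^ 6) -
    15 * (a ^ 4 * b ^ 2 + a ^ 2 * b ^ 4 + a ^ 4 * c ^ 2 + a ^ 2 * c ^ 4 +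
      b ^ 4 * c ^ 2 + b ^ 2 * c ^ 4) + 180 * a ^ 2 * b ^ 2 * c ^ 2

/-- `f_{8,2}`. -/
def f82 (a b : ℝ) : ℝ :=
  a ^ 8 - 28 * a ^ 6 * b ^ 2 + 70 * a ^ 4 * b ^ 4 - 28 * a ^ 2 * b ^ 6 + b ^ 8

/-- `f_{8,4}`. -/
def f84 (a b c d : ℝ) : ℝ :=
  3 * (a ^ 8 + b ^ 8 + c ^ 8 + d ^ 8) -
    28 * (a ^ 6 * b ^ 2 + a ^ 6 * c ^ 2 + a ^ 6 * d ^ 2 +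
      b ^ 6 * a ^ 2 + b ^ 6 * c ^ 2 + b ^ 6 * d ^ 2 +
      c ^ 6 * a ^ 2 + c ^ 6 * b ^ 2 + c ^ 6 * d ^ 2 +
      d ^ 6 * a ^ 2 + d ^ 6 * b ^ 2 + d ^ 6 * c ^ 2) +
    210 * (a ^ 4 * b ^ 2 * c ^ 2 + a ^ 4 * b ^ 2 * d ^ 2 + a ^ 4 * c ^ 2 * d ^ 2 +
      b ^ 4 * a ^ 2 * c ^ 2 + b ^ 4 * a ^ 2 * d ^ 2 + b ^ 4 * c ^ 2 * d ^ 2 +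
      c ^ 4 * a ^ 2 * b ^ 2 + c ^ 4 * a ^ 2 * d ^ 2 + c ^ 4 * b ^ 2 * d ^ 2 +
      d ^ 4 * a ^ 2 * b ^ 2 + d ^ 4 * a ^ 2 * c ^ 2 + d ^ 4 * b ^ 2 * c ^ 2) -
    3780 * a ^ 2 * b ^ 2 * c ^ 2 * d ^ 2

end


open scoped ENNReal NNReal

noncomputable section
namespace EDAux


lemma sp_sp (n : ℕ) (g : Equiv.Perm (Fin n)) (ε : Fin n → Bool)
    (x : EuclideanSpace ℝ (Fin n)) :
    signedPerm n g⁻¹ (fun i => ε (g⁻¹ i)) (signedPerm n g ε x) = x := by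
  ext i
  simp only [signedPerm, Equiv.Perm.coe_inv, Equiv.apply_symm_apply]
  rcases h : ε (g.symm i) <;> simp only [h, Bool.false_eq_true, if_false, if_true, one_mul, neg_one_mul, neg_mul, neg_neg, one_mul] <;> exact congrArg x.ofLp (g.apply_symm_apply i)

lemma sp_sp' (n : ℕ) (g : Equiv.Perm (Fin n)) (ε : Fin n → Bool)
    (x : EuclideanSpace ℝ (Fin n)) :
    signedPerm n g ε (signedPerm n g⁻¹ (fun i => ε (g⁻¹ i)) x) = x := by
  ext i
  simp only [signedPerm, Equiv.Perm.coe_inv, Equiv.symm_apply_apply]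
  rcases h : ε i <;> simp only [h, Bool.false_eq_true, if_false, if_true, one_mul, neg_one_mul, neg_mul, neg_neg, one_mul] <;> exact congrArg x.ofLp (g.symm_apply_apply i)

/-- signed permutations as isometry equivalences of Euclidean space -/
def spEquiv (n : ℕ) (g : Equiv.Perm (Fin n)) (ε : Fin n → Bool) :
    EuclideanSpace ℝ (Fin n) ≃ᵢ EuclideanSpace ℝ (Fin n) where
  toFun := signedPerm n g ε
  invFun := signedPerm n g⁻¹ (fun i => ε (g⁻¹ i))
  left_inv x := sp_sp n g ε x
  right_inv x := sp_sp' n g ε x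
  isometry_toFun := by
    intro x y
    simp only [edist_dist, EuclideanSpace.dist_eq]
    congr 1
    congr 1
    rw [← Equiv.sum_comp g (fun i => dist (x i) (y i) ^ 2)]
    refine Finset.sum_congr rfl fun i _ => ?_
    show dist ((if ε i then (-1:ℝ) else 1) * x (g i)) ((if ε i then (-1:ℝ) else 1) * y (g i)) ^ 2
      = dist (x (g i)) (y (g i)) ^ 2
    rcases h : ε i <;> simp [h, Real.dist_eq, ← abs_pow] <;> ring_nf

lemma spEquiv_zero (n : ℕ) (g : Equiv.Perm (Fin n)) (ε : Fin n → Bool) :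
    spEquiv n g ε 0 = 0 := by
  ext i
  show (if ε i then (-1:ℝ) else 1) * (0 : EuclideanSpace ℝ (Fin n)) (g i) = (0 : EuclideanSpace ℝ (Fin n)) i
  simp

lemma spEquiv_preimage_sphere (n : ℕ) (g : Equiv.Perm (Fin n)) (ε : Fin n → Bool) (r : ℝ) :
    (spEquiv n g ε) ⁻¹' (sphere (0 : EuclideanSpace ℝ (Fin n)) r) = sphere 0 r := by
  ext x
  simp only [Set.mem_preimage, mem_sphere_iff_norm, sub_zero] at *
  constructor <;> intro h
  · rw [← h]
    have := (spEquiv n g ε).isometry.dist_eq x 0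
    rw [spEquiv_zero] at this
    simpa [dist_eq_norm] using this.symm
  · have := (spEquiv n g ε).isometry.dist_eq x 0
    rw [spEquiv_zero] at this
    rw [← h]
    simpa [dist_eq_norm] using this

/-- set-integral invariance over the sphere under a signed permutation. -/
lemma setIntegral_sp (n : ℕ) (g : Equiv.Perm (Fin n)) (ε : Fin n → Bool) (r : ℝ) (d : ℝ)
    (F : EuclideanSpace ℝ (Fin n) → ℝ) :
    ∫ x in sphere (0 : EuclideanSpace ℝ (Fin n)) r, F (signedPerm n g ε x) ∂(μH[d])
      = ∫ x in sphere (0 : EuclideanSpace ℝ (Fin n)) r, F x ∂(μH[d]) := by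
  have hmp := (spEquiv n g ε).measurePreserving_hausdorffMeasure d
  have hemb : MeasurableEmbedding (spEquiv n g ε) :=
    (spEquiv n g ε).toHomeomorph.measurableEmbedding
  have := hmp.setIntegral_preimage_emb hemb F (sphere 0 r)
  rw [spEquiv_preimage_sphere] at this
  exact this



lemma coord_abs_le_norm {n : ℕ} (x : EuclideanSpace ℝ (Fin n)) (i : Fin n) :
    |x i| ≤ ‖x‖ := by
  rw [EuclideanSpace.norm_eq]
  have h1 : |x i| = Real.sqrt ((x i) ^ 2) := (Real.sqrt_sq_eq_abs _).symm
  rw [h1]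
  apply Real.sqrt_le_sqrt
  have := Finset.single_le_sum (f := fun j => (x j) ^ 2) (fun j _ => sq_nonneg _)
    (Finset.mem_univ i)
  calc (x i) ^ 2 ≤ ∑ j, (x j) ^ 2 := this
    _ = ∑ j, ‖x j‖ ^ 2 := by simp [Real.norm_eq_abs, sq_abs]

lemma norm_E_le {n : ℕ} (x : Fin n → ℝ) :
    ‖(WithLp.equiv 2 (Fin n → ℝ)).symm x‖ ≤ Real.sqrt n * ‖x‖ := by
  rw [EuclideanSpace.norm_eq]
  have h1 : ∀ i, ‖(WithLp.equiv 2 (Fin n → ℝ)).symm x i‖ ^ 2 ≤ ‖x‖ ^ 2 := by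
    intro i
    have := norm_le_pi_norm x i
    have h0 : (0:ℝ) ≤ ‖x i‖ := norm_nonneg _
    have h2 : (WithLp.equiv 2 (Fin n → ℝ)).symm x i = x i := rfl
    rw [h2]; nlinarith
  calc Real.sqrt (∑ i, ‖(WithLp.equiv 2 (Fin n → ℝ)).symm x i‖ ^ 2)
      ≤ Real.sqrt (∑ _i : Fin n, ‖x‖ ^ 2) := Real.sqrt_le_sqrt (Finset.sum_le_sum fun i _ => h1 i)
    _ = Real.sqrt (n * ‖x‖ ^ 2) := by rw [Finset.sum_const]; simp [nsmul_eq_mul]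
    _ = Real.sqrt n * Real.sqrt (‖x‖ ^ 2) := by rw [Real.sqrt_mul (Nat.cast_nonneg n)]
    _ ≤ Real.sqrt n * ‖x‖ := by rw [Real.sqrt_sq (norm_nonneg x)]

lemma radial_key {E : Type*} [NormedAddCommGroup E] [NormedSpace ℝ E]
    (r : ℝ) (hr : 0 ≤ r) (u v : E) (hu : 1 ≤ ‖u‖) (hv : 1 ≤ ‖v‖) :
    ‖(r * ‖u‖⁻¹) • u - (r * ‖v‖⁻¹) • v‖ ≤ 2 * r * ‖u - v‖ := by
  set a := ‖u‖ with ha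
  set b := ‖v‖ with hb
  have ha0 : 0 < a := lt_of_lt_of_le one_pos hu
  have hb0 : 0 < b := lt_of_lt_of_le one_pos hv
  have hsplit : (r * a⁻¹) • u - (r * b⁻¹) • v
      = (r * a⁻¹) • (u - v) + (r * a⁻¹ - r * b⁻¹) • v := by
    rw [smul_sub, sub_smul]; abel
  rw [hsplit]
  have hba : |b - a| ≤ ‖u - v‖ := by
    have := abs_norm_sub_norm_le v u
    rwa [← ha, ← hb, norm_sub_rev] at this
  have h2 : ‖(r * a⁻¹ - r * b⁻¹) • v‖ = |r * a⁻¹ - r * b⁻¹| * b := by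
    rw [norm_smul, Real.norm_eq_abs, ← hb]
  have h3 : r * a⁻¹ - r * b⁻¹ = r * (b - a) * (a⁻¹ * b⁻¹) := by
    field_simp
  have h4 : |r * a⁻¹ - r * b⁻¹| * b = r * |b - a| * a⁻¹ := by
    rw [h3, abs_mul, abs_mul, abs_of_nonneg hr,
      abs_of_nonneg (by positivity : (0:ℝ) ≤ a⁻¹ * b⁻¹)]
    field_simp
  have hainv : a⁻¹ ≤ 1 := by
    rw [inv_le_one_iff₀]; right; exact hu
  calc ‖(r * a⁻¹) • (u - v) + (r * a⁻¹ - r * b⁻¹) • v‖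
      ≤ ‖(r * a⁻¹) • (u - v)‖ + ‖(r * a⁻¹ - r * b⁻¹) • v‖ := norm_add_le _ _
    _ = (r * a⁻¹) * ‖u - v‖ + r * |b - a| * a⁻¹ := by
        rw [h2, h4, norm_smul, Real.norm_eq_abs, abs_of_nonneg (by positivity)]
    _ ≤ 2 * r * ‖u - v‖ := by
        have hnn : (0:ℝ) ≤ ‖u - v‖ := norm_nonneg _
        have hai0 : (0:ℝ) ≤ a⁻¹ := by positivity
        have habs : (0:ℝ) ≤ |b - a| := abs_nonneg _
        nlinarith [mul_le_mul_of_nonneg_left hba (mul_nonneg hr hai0),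
          mul_le_mul_of_nonneg_right hainv (mul_nonneg hr hnn)]



lemma hm_pi (m : ℕ) : (μH[(m:ℝ)] : Measure (Fin m → ℝ)) = volume := by
  have := hausdorffMeasure_pi_real (ι := Fin m)
  rwa [Fintype.card_fin] at this

lemma insertNth_lipschitz (m : ℕ) (j : Fin (m + 1)) (c : ℝ) :
    LipschitzWith 1 (fun y : Fin m → ℝ => (j.insertNth c y : Fin (m + 1) → ℝ)) := by
  apply LipschitzWith.of_dist_le_mul
  intro y z
  rw [NNReal.coe_one, one_mul, dist_pi_le_iff dist_nonneg]
  intro i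
  refine Fin.succAboveCases j ?_ (fun k => ?_) i
  · simpa using dist_nonneg
  · rw [Fin.insertNth_apply_succAbove, Fin.insertNth_apply_succAbove]
    exact dist_le_pi_dist y z k

/-- The sup-norm unit sphere is covered by Lipschitz images of balls. -/
lemma supSphere_subset (m : ℕ) :
    sphere (0 : Fin (m + 1) → ℝ) 1 ⊆
      ⋃ p : Fin (m + 1) × Bool,
        (fun y : Fin m → ℝ => (p.1.insertNth (if p.2 then 1 else -1) y : Fin (m + 1) → ℝ)) ''
          closedBall 0 1 := by
  intro x hx
  rw [mem_sphere_iff_norm, sub_zero] at hx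
  have hsup : ∃ j, ‖x‖ = ‖x j‖ := by
    obtain ⟨j, _, hj⟩ := Finset.exists_mem_eq_sup (Finset.univ : Finset (Fin (m + 1)))
      Finset.univ_nonempty (fun i => ‖x i‖₊)
    exact ⟨j, by rw [← coe_nnnorm x, Pi.nnnorm_def, hj, coe_nnnorm]⟩
  obtain ⟨j, hj⟩ := hsup
  have hxj : |x j| = 1 := by rw [← Real.norm_eq_abs, ← hj, hx]
  have hxj' : x j = 1 ∨ x j = -1 := by
    rcases abs_cases (x j) with ⟨h1, _⟩ | ⟨h1, _⟩
    · left; rw [← h1, hxj]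
    · right; linarith
  refine Set.mem_iUnion.mpr ⟨⟨j, decide (x j = 1)⟩, ⟨Fin.removeNth j x, ?_, ?_⟩⟩
  · rw [mem_closedBall, dist_zero_right]
    rw [pi_norm_le_iff_of_nonneg zero_le_one]
    intro k
    calc ‖Fin.removeNth j x k‖ = ‖x (j.succAbove k)‖ := rfl
      _ ≤ ‖x‖ := norm_le_pi_norm x _
      _ = 1 := hx
  · have : (if decide (x j = 1) = true then (1:ℝ) else -1) = x j := by
      rcases hxj' with h | h <;> norm_num [h]
    rw [this]
    exact Fin.insertNth_self_removeNth j x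



lemma sup_le_norm_E {n : ℕ} (x : Fin n → ℝ) :
    ‖x‖ ≤ ‖(WithLp.equiv 2 (Fin n → ℝ)).symm x‖ := by
  rw [pi_norm_le_iff_of_nonneg (norm_nonneg _)]
  intro i
  rw [Real.norm_eq_abs]
  exact coord_abs_le_norm ((WithLp.equiv 2 (Fin n → ℝ)).symm x) i

/-- The projection dropping the last coordinate is 1-Lipschitz from Euclidean to sup. -/
lemma proj_lipschitz (m : ℕ) :
    LipschitzWith 1 (fun u : EuclideanSpace ℝ (Fin (m + 1)) =>
      (fun k : Fin m => u k.castSucc : Fin m → ℝ)) := by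
  apply LipschitzWith.of_dist_le_mul
  intro u v
  rw [NNReal.coe_one, one_mul, dist_pi_le_iff dist_nonneg]
  intro k
  have h1 : dist (u k.castSucc) (v k.castSucc) = |(u - v) k.castSucc| := by
    rw [Real.dist_eq]; rfl
  rw [h1, dist_eq_norm]
  exact coord_abs_le_norm (u - v) _

lemma closedBall_subset_proj_sphere (m : ℕ) (r : ℝ) (hr : 0 < r) :
    closedBall (0 : Fin m → ℝ) (r / Real.sqrt (m + 1)) ⊆
      (fun u : EuclideanSpace ℝ (Fin (m + 1)) => (fun k : Fin m => u k.castSucc : Fin m → ℝ)) ''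
        sphere 0 r := by
  intro y hy
  rw [mem_closedBall, dist_zero_right] at hy
  set c := r / Real.sqrt (m + 1) with hc
  have hsq : Real.sqrt (m + 1) > 0 := Real.sqrt_pos.mpr (by positivity)
  have hsum : ∑ k, (y k) ^ 2 ≤ r ^ 2 := by
    have hyk : ∀ k, (y k) ^ 2 ≤ c ^ 2 := by
      intro k
      have h1 : |y k| ≤ c := le_trans (by rw [← Real.norm_eq_abs]; exact norm_le_pi_norm y k) hy
      have h2 : (0:ℝ) ≤ c := le_trans (abs_nonneg _) h1
      nlinarith [abs_nonneg (y k), sq_abs (y k)]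
    have hcsq : c ^ 2 = r ^ 2 / (m + 1) := by
      rw [hc, div_pow, Real.sq_sqrt (by positivity : (0:ℝ) ≤ (m:ℝ) + 1)]
    calc ∑ k, (y k) ^ 2 ≤ ∑ _k : Fin m, c ^ 2 := Finset.sum_le_sum fun k _ => hyk k
      _ = m * c ^ 2 := by rw [Finset.sum_const]; simp [nsmul_eq_mul]
      _ = m * (r ^ 2 / (m + 1)) := by rw [hcsq]
      _ ≤ r ^ 2 := by
          rw [mul_div_assoc']
          rw [div_le_iff₀ (by positivity : (0:ℝ) < (m:ℝ) + 1)]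
          nlinarith [sq_nonneg r]
  set t := Real.sqrt (r ^ 2 - ∑ k, (y k) ^ 2) with ht
  refine ⟨(WithLp.toLp 2 (fun i : Fin (m + 1) => (Fin.lastCases t y i : ℝ)) : EuclideanSpace ℝ (Fin (m + 1))), ?_, ?_⟩
  · rw [mem_sphere_iff_norm, sub_zero, EuclideanSpace.norm_eq]
    have hsumsq : ∑ i : Fin (m + 1), ‖(WithLp.toLp 2 (fun i : Fin (m + 1) => (Fin.lastCases t y i : ℝ)) :
        EuclideanSpace ℝ (Fin (m + 1))) i‖ ^ 2 = r ^ 2 := by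
      rw [Fin.sum_univ_castSucc]
      simp only [Fin.lastCases_castSucc, Fin.lastCases_last]
      rw [Real.norm_eq_abs, sq_abs, ht, Real.sq_sqrt (by linarith : (0:ℝ) ≤ r ^ 2 - ∑ k, (y k) ^ 2)]
      have : ∀ k : Fin m, ‖y k‖ ^ 2 = (y k) ^ 2 := fun k => by rw [Real.norm_eq_abs, sq_abs]
      rw [Finset.sum_congr rfl fun k _ => this k]
      ring
    rw [hsumsq, Real.sqrt_sq hr.le]
  · funext k
    exact (Fin.lastCases_castSucc (motive := fun _ => ℝ) (last := t) (cast := y) k :)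

lemma sphere_hm_ne_zero (m : ℕ) (r : ℝ) (hr : 0 < r) :
    μH[(m:ℝ)] (sphere (0 : EuclideanSpace ℝ (Fin (m + 1))) r) ≠ 0 := by
  set c := r / Real.sqrt (m + 1) with hc
  have hc0 : 0 < c := by
    apply div_pos hr (Real.sqrt_pos.mpr (by positivity))
  have h1 : (0:ℝ≥0∞) < volume (closedBall (0 : Fin m → ℝ) c) :=
    lt_of_lt_of_le (measure_ball_pos volume 0 hc0) (measure_mono ball_subset_closedBall)
  rw [← hm_pi m] at h1
  have h2 := measure_mono (closedBall_subset_proj_sphere m r hr)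
    (μ := (μH[(m:ℝ)] : Measure (Fin m → ℝ)))
  have h3 := (proj_lipschitz m).hausdorffMeasure_image_le
    (by positivity : (0:ℝ) ≤ (m:ℝ)) (sphere (0 : EuclideanSpace ℝ (Fin (m + 1))) r)
  intro h0
  rw [h0, ENNReal.coe_one, ENNReal.one_rpow, mul_zero] at h3
  have := lt_of_lt_of_le (lt_of_lt_of_le h1 h2) h3
  simp at this



-- assume previous lemmas available; restate needed ones as axioms for isolated testing
/-- The radial projection onto the Euclidean sphere of radius `r`. -/
noncomputable def radial (n : ℕ) (r : ℝ) (x : Fin n → ℝ) : EuclideanSpace ℝ (Fin n) :=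
  (r * ‖(WithLp.equiv 2 (Fin n → ℝ)).symm x‖⁻¹) • (WithLp.equiv 2 (Fin n → ℝ)).symm x

lemma radial_lipschitzOn (n : ℕ) (r : ℝ) (hr : 0 ≤ r) :
    LipschitzOnWith (Real.toNNReal (2 * r * Real.sqrt n)) (radial n r)
      {x : Fin n → ℝ | 1 ≤ ‖(WithLp.equiv 2 (Fin n → ℝ)).symm x‖} := by
  rw [lipschitzOnWith_iff_dist_le_mul]
  intro x hx y hy
  rw [Set.mem_setOf_eq] at hx hy
  have key := radial_key r hr ((WithLp.equiv 2 (Fin n → ℝ)).symm x)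
    ((WithLp.equiv 2 (Fin n → ℝ)).symm y) hx hy
  have hsub : (WithLp.equiv 2 (Fin n → ℝ)).symm x - (WithLp.equiv 2 (Fin n → ℝ)).symm y
      = (WithLp.equiv 2 (Fin n → ℝ)).symm (x - y) := rfl
  calc dist (radial n r x) (radial n r y)
      = ‖(r * ‖(WithLp.equiv 2 (Fin n → ℝ)).symm x‖⁻¹) • (WithLp.equiv 2 (Fin n → ℝ)).symm x
          - (r * ‖(WithLp.equiv 2 (Fin n → ℝ)).symm y‖⁻¹) • (WithLp.equiv 2 (Fin n → ℝ)).symm y‖ :=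
        dist_eq_norm _ _
    _ ≤ 2 * r * ‖(WithLp.equiv 2 (Fin n → ℝ)).symm x - (WithLp.equiv 2 (Fin n → ℝ)).symm y‖ := key
    _ = 2 * r * ‖(WithLp.equiv 2 (Fin n → ℝ)).symm (x - y)‖ := by rw [hsub]
    _ ≤ 2 * r * (Real.sqrt n * ‖x - y‖) := by
        have := norm_E_le (x - y)
        have h2 : (0:ℝ) ≤ 2 * r := by linarith
        exact mul_le_mul_of_nonneg_left this h2
    _ = (2 * r * Real.sqrt n) * dist x y := by rw [dist_eq_norm]; ring
    _ = (Real.toNNReal (2 * r * Real.sqrt n) : ℝ) * dist x y := by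
        rw [Real.coe_toNNReal _ (by positivity)]

lemma sphere_subset_radial (n : ℕ) (r : ℝ) (hr : 0 < r) :
    sphere (0 : EuclideanSpace ℝ (Fin n)) r ⊆
      radial n r '' sphere (0 : Fin n → ℝ) 1 := by
  intro u hu
  rw [mem_sphere_iff_norm, sub_zero] at hu
  have hu0 : u ≠ 0 := by
    intro h; rw [h, norm_zero] at hu; exact hr.ne' hu.symm
  set u' : Fin n → ℝ := WithLp.equiv 2 (Fin n → ℝ) u with hu'
  have hs0 : 0 < ‖u'‖ := by
    rw [norm_pos_iff]
    intro h
    apply hu0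
    have : u = (WithLp.equiv 2 (Fin n → ℝ)).symm u' := rfl
    rw [this, h]
    rfl
  refine ⟨‖u'‖⁻¹ • u', ?_, ?_⟩
  · rw [mem_sphere_iff_norm, sub_zero, norm_smul, norm_inv, norm_norm]
    field_simp
  · have hE : (WithLp.equiv 2 (Fin n → ℝ)).symm (‖u'‖⁻¹ • u') = ‖u'‖⁻¹ • u := rfl
    rw [radial, hE, norm_smul, norm_inv, norm_norm, hu]
    rw [smul_smul]
    have : r * (‖u'‖⁻¹ * r)⁻¹ * ‖u'‖⁻¹ = 1 := by
      field_simp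
    rw [this, one_smul]

lemma sphere_hm_ne_top (m : ℕ) (r : ℝ) (hr : 0 < r) :
    μH[(m:ℝ)] (sphere (0 : EuclideanSpace ℝ (Fin (m + 1))) r) ≠ ⊤ := by
  set n := m + 1
  set K : ℝ≥0 := Real.toNNReal (2 * r * Real.sqrt n) with hK
  set S := sphere (0 : Fin n → ℝ) 1 with hS
  -- the sup sphere is inside the Lipschitz domain
  have hSA : S ⊆ {x : Fin n → ℝ | 1 ≤ ‖(WithLp.equiv 2 (Fin n → ℝ)).symm x‖} := by
    intro x hx
    rw [hS, mem_sphere_iff_norm, sub_zero] at hx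
    rw [Set.mem_setOf_eq, ← hx]
    exact sup_le_norm_E x
  have hlip : LipschitzOnWith K (radial n r) S :=
    (radial_lipschitzOn n r hr.le).mono hSA
  have h1 : μH[(m:ℝ)] (sphere (0 : EuclideanSpace ℝ (Fin n)) r)
      ≤ μH[(m:ℝ)] (radial n r '' S) :=
    measure_mono (sphere_subset_radial n r hr)
  have h2 : μH[(m:ℝ)] (radial n r '' S) ≤ (K : ℝ≥0∞) ^ (m:ℝ) * μH[(m:ℝ)] S :=
    hlip.hausdorffMeasure_image_le (by positivity)
  -- bound the measure of the sup sphere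
  have h3 : μH[(m:ℝ)] S ≤ ∑' p : Fin n × Bool,
      μH[(m:ℝ)] ((fun y : Fin m → ℝ => (p.1.insertNth (if p.2 then 1 else -1) y : Fin n → ℝ)) ''
        closedBall 0 1) :=
    le_trans (measure_mono (supSphere_subset m)) (measure_iUnion_le _)
  have h4 : ∀ p : Fin n × Bool,
      μH[(m:ℝ)] ((fun y : Fin m → ℝ => (p.1.insertNth (if p.2 then 1 else -1) y : Fin n → ℝ)) ''
        closedBall 0 1) ≤ volume (closedBall (0 : Fin m → ℝ) 1) := by
    intro p
    have := (insertNth_lipschitz m p.1 (if p.2 then 1 else -1)).hausdorffMeasure_image_le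
      (by positivity : (0:ℝ) ≤ (m:ℝ)) (closedBall (0 : Fin m → ℝ) 1)
    rwa [ENNReal.coe_one, ENNReal.one_rpow, one_mul, hm_pi m] at this
  have h5 : (∑' p : Fin n × Bool, volume (closedBall (0 : Fin m → ℝ) 1)) < ⊤ := by
    rw [tsum_fintype]
    exact ENNReal.sum_lt_top.mpr fun p _ => measure_closedBall_lt_top
  have h6 : μH[(m:ℝ)] S < ⊤ :=
    lt_of_le_of_lt (le_trans h3 (ENNReal.tsum_le_tsum h4)) h5
  have h7 : (K : ℝ≥0∞) ^ (m:ℝ) ≠ ⊤ :=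
    ENNReal.rpow_ne_top_of_nonneg (by positivity) ENNReal.coe_ne_top
  exact ne_top_of_le_ne_top (ENNReal.mul_ne_top h7 h6.ne) (le_trans h1 h2)



variable {n : ℕ} {r : ℝ} {d : ℝ}

lemma integrableOn_sphere (hfin : μH[d] (sphere (0 : EuclideanSpace ℝ (Fin n)) r) ≠ ⊤)
    {f : EuclideanSpace ℝ (Fin n) → ℝ} (hf : Continuous f) :
    IntegrableOn f (sphere (0 : EuclideanSpace ℝ (Fin n)) r) μH[d] := by
  obtain ⟨C, hC⟩ := (isCompact_sphere (0 : EuclideanSpace ℝ (Fin n)) r).exists_bound_of_continuousOn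
    hf.continuousOn
  apply Measure.integrableOn_of_bounded hfin hf.aestronglyMeasurable
  filter_upwards [ae_restrict_mem isClosed_sphere.measurableSet] with x hx using hC x hx

/-- integral of a monomial with an odd exponent over the sphere vanishes. -/
lemma intOdd (dd : Fin n → ℕ) (j : Fin n) (hodd : Odd (dd j)) :
    ∫ x in sphere (0 : EuclideanSpace ℝ (Fin n)) r, (∏ i, x i ^ dd i) ∂(μH[d]) = 0 := by
  set F : EuclideanSpace ℝ (Fin n) → ℝ := fun x => ∏ i, x i ^ dd i with hF
  set ε : Fin n → Bool := fun i => decide (i = j) with hε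
  have key : ∀ x : EuclideanSpace ℝ (Fin n), F (signedPerm n 1 ε x) = -F x := by
    intro x
    have h1 : ∀ i, signedPerm n 1 ε x i = (if i = j then (-1:ℝ) else 1) * x i := by
      intro i
      show (if ε i then (-1:ℝ) else 1) * x ((1 : Equiv.Perm (Fin n)) i) = _
      rw [Equiv.Perm.one_apply]
      by_cases h : i = j <;> simp [hε, h]
    calc F (signedPerm n 1 ε x) = ∏ i, ((if i = j then (-1:ℝ) else 1) * x i) ^ dd i := by
          rw [hF]; exact Finset.prod_congr rfl fun i _ => by rw [h1 i]
      _ = (∏ i, (if i = j then (-1:ℝ) else 1) ^ dd i) * ∏ i, x i ^ dd i := by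
          rw [← Finset.prod_mul_distrib]
          exact Finset.prod_congr rfl fun i _ => mul_pow _ _ _
      _ = -F x := by
          have h2 : (∏ i, (if i = j then (-1:ℝ) else 1) ^ dd i) = -1 := by
            rw [Finset.prod_eq_single_of_mem j (Finset.mem_univ j)
              (fun i _ hij => by simp [hij])]
            simp [hodd.neg_one_pow]
          rw [h2, hF]; ring
  have h := setIntegral_sp n 1 ε r d F
  have h2 : (fun x => F (signedPerm n 1 ε x)) = fun x => -F x := funext key
  rw [h2, integral_neg] at h
  linarith

lemma intSqSwap (i j : Fin n) :
    ∫ x in sphere (0 : EuclideanSpace ℝ (Fin n)) r, (x i) ^ 2 ∂(μH[d])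
      = ∫ x in sphere (0 : EuclideanSpace ℝ (Fin n)) r, (x j) ^ 2 ∂(μH[d]) := by
  set F : EuclideanSpace ℝ (Fin n) → ℝ := fun x => (x i) ^ 2 with hF
  have h := setIntegral_sp n (Equiv.swap i j) (fun _ => false) r d F
  have h2 : (fun x : EuclideanSpace ℝ (Fin n) => F (signedPerm n (Equiv.swap i j) (fun _ => false) x))
      = fun x => (x j) ^ 2 := by
    funext x
    show ((if false then (-1:ℝ) else 1) * x (Equiv.swap i j i)) ^ 2 = (x j) ^ 2
    rw [Equiv.swap_apply_left]
    norm_num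
  rw [h2] at h
  exact h.symm

lemma normsq (x : EuclideanSpace ℝ (Fin n)) : ‖x‖ ^ 2 = ∑ i, (x i) ^ 2 := by
  rw [EuclideanSpace.norm_eq, Real.sq_sqrt (Finset.sum_nonneg fun i _ => sq_nonneg _)]
  exact Finset.sum_congr rfl fun i _ => by rw [Real.norm_eq_abs, sq_abs]

lemma avgConst (hfin : μH[d] (sphere (0 : EuclideanSpace ℝ (Fin n)) r) ≠ ⊤)
    (hne : μH[d] (sphere (0 : EuclideanSpace ℝ (Fin n)) r) ≠ 0) :
    ⨍ x in sphere (0 : EuclideanSpace ℝ (Fin n)) r, (1:ℝ) ∂(μH[d]) = 1 := by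
  rw [setAverage_eq, setIntegral_const]
  have h : (μH[d] (sphere (0 : EuclideanSpace ℝ (Fin n)) r)).toReal ≠ 0 :=
    ENNReal.toReal_ne_zero.mpr ⟨hne, hfin⟩
  rw [smul_eq_mul, smul_eq_mul, mul_one]
  exact inv_mul_cancel₀ h

lemma avgSq (hn : n ≠ 0) (hr : 0 ≤ r)
    (hfin : μH[d] (sphere (0 : EuclideanSpace ℝ (Fin n)) r) ≠ ⊤)
    (hne : μH[d] (sphere (0 : EuclideanSpace ℝ (Fin n)) r) ≠ 0) (j : Fin n) :
    ⨍ x in sphere (0 : EuclideanSpace ℝ (Fin n)) r, (x j) ^ 2 ∂(μH[d]) = r ^ 2 / n := by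
  set s := sphere (0 : EuclideanSpace ℝ (Fin n)) r with hs
  set μ : Measure (EuclideanSpace ℝ (Fin n)) := μH[d] with hμ
  have hint : ∀ i : Fin n, IntegrableOn (fun x : EuclideanSpace ℝ (Fin n) => (x i) ^ 2) s μ := by
    intro i
    have hc : Continuous fun x : EuclideanSpace ℝ (Fin n) => x i :=
      (continuous_apply i).comp (PiLp.continuous_ofLp (p := 2) (β := fun _ : Fin n => ℝ))
    exact integrableOn_sphere hfin (hc.pow 2)
  have hsum : ∑ i, ∫ x in s, (x i) ^ 2 ∂μ = (μ s).toReal * r ^ 2 := by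
    rw [← integral_finset_sum _ (fun i _ => hint i)]
    rw [setIntegral_congr_fun isClosed_sphere.measurableSet
      (g := fun _ => r ^ 2) (fun x hx => by
        rw [← normsq x]
        rw [mem_sphere_iff_norm, sub_zero] at hx
        rw [hx])]
    rw [setIntegral_const, smul_eq_mul]
    rfl
  have hswap : ∀ i : Fin n, ∫ x in s, (x i) ^ 2 ∂μ = ∫ x in s, (x j) ^ 2 ∂μ :=
    fun i => intSqSwap i j
  have hn' : (0:ℝ) < n := by exact_mod_cast Nat.pos_of_ne_zero hn
  have hj : (n:ℝ) * ∫ x in s, (x j) ^ 2 ∂μ = (μ s).toReal * r ^ 2 := by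
    rw [← hsum, Finset.sum_congr rfl fun i _ => hswap i, Finset.sum_const]
    simp [nsmul_eq_mul]
  have htr : (μ s).toReal ≠ 0 := ENNReal.toReal_ne_zero.mpr ⟨hne, hfin⟩
  rw [setAverage_eq, smul_eq_mul]
  have hintj : ∫ x in s, (x j) ^ 2 ∂μ = (μ s).toReal * r ^ 2 / n := by
    rw [eq_div_iff hn'.ne']
    linarith
  rw [hintj, div_eq_mul_inv, div_eq_mul_inv]
  rw [← mul_assoc]
  rw [measureReal_def, inv_mul_cancel_left₀ htr]



variable {n : ℕ} {X : Finset (EuclideanSpace ℝ (Fin n))} {w : EuclideanSpace ℝ (Fin n) → ℝ}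

/-- reindex a sum over a fully symmetric set by a signed permutation. -/
lemma sum_reindex (hsym : FullySymmetric n X w) (g : Equiv.Perm (Fin n)) (ε : Fin n → Bool)
    (G : EuclideanSpace ℝ (Fin n) → ℝ) :
    ∑ x ∈ X, G x = ∑ x ∈ X, G (signedPerm n g ε x) := by
  refine Finset.sum_nbij' (i := signedPerm n g⁻¹ (fun i => ε (g⁻¹ i))) (j := signedPerm n g ε)
    ?_ ?_ ?_ ?_ ?_
  · intro a ha; exact (hsym g⁻¹ _ a ha).1
  · intro a ha; exact (hsym g _ a ha).1
  · intro a _; exact sp_sp' n g ε a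
  · intro a _; exact sp_sp n g ε a
  · intro a _; rw [sp_sp' n g ε a]

lemma sumX_odd (hsym : FullySymmetric n X w) (dd : Fin n → ℕ) (j : Fin n) (hodd : Odd (dd j)) :
    ∑ x ∈ X, w x * ∏ i, x i ^ dd i = 0 := by
  set ε : Fin n → Bool := fun i => decide (i = j) with hε
  have key : ∀ x : EuclideanSpace ℝ (Fin n),
      (∏ i, (signedPerm n 1 ε x) i ^ dd i) = -∏ i, x i ^ dd i := by
    intro x
    have h1 : ∀ i, signedPerm n 1 ε x i = (if i = j then (-1:ℝ) else 1) * x i := by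
      intro i
      show (if ε i then (-1:ℝ) else 1) * x ((1 : Equiv.Perm (Fin n)) i) = _
      rw [Equiv.Perm.one_apply]
      by_cases h : i = j <;> simp [hε, h]
    calc (∏ i, (signedPerm n 1 ε x) i ^ dd i)
        = ∏ i, ((if i = j then (-1:ℝ) else 1) * x i) ^ dd i :=
          Finset.prod_congr rfl fun i _ => by rw [h1 i]
      _ = (∏ i, (if i = j then (-1:ℝ) else 1) ^ dd i) * ∏ i, x i ^ dd i := by
          rw [← Finset.prod_mul_distrib]
          exact Finset.prod_congr rfl fun i _ => mul_pow _ _ _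
      _ = -∏ i, x i ^ dd i := by
          have h2 : (∏ i, (if i = j then (-1:ℝ) else 1) ^ dd i) = -1 := by
            rw [Finset.prod_eq_single_of_mem j (Finset.mem_univ j)
              (fun i _ hij => by simp [hij])]
            simp [hodd.neg_one_pow]
          rw [h2]; ring
  have h := sum_reindex hsym 1 ε (fun x => w x * ∏ i, x i ^ dd i)
  have h2 : ∑ x ∈ X, w (signedPerm n 1 ε x) * ∏ i, (signedPerm n 1 ε x) i ^ dd i
      = ∑ x ∈ X, -(w x * ∏ i, x i ^ dd i) := by
    refine Finset.sum_congr rfl fun x hx => ?_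
    rw [(hsym 1 ε x hx).2, key x]
    ring
  rw [h2, Finset.sum_neg_distrib] at h
  linarith

lemma sumX_swap (hsym : FullySymmetric n X w) (i j : Fin n) :
    ∑ x ∈ X, w x * (x i) ^ 2 = ∑ x ∈ X, w x * (x j) ^ 2 := by
  have h := sum_reindex hsym (Equiv.swap i j) (fun _ => false) (fun x => w x * (x i) ^ 2)
  rw [h]
  refine Finset.sum_congr rfl fun x hx => ?_
  rw [(hsym (Equiv.swap i j) _ x hx).2]
  congr 1
  show ((if false then (-1:ℝ) else 1) * x (Equiv.swap i j i)) ^ 2 = (x j) ^ 2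
  rw [Equiv.swap_apply_left]
  norm_num

/-- classification of even multi-indices of degree at most 3 -/
lemma classify (dd : Fin n →₀ ℕ) (h : ∑ i, dd i ≤ 3) :
    (∃ j, Odd (dd j)) ∨ (∀ i, dd i = 0) ∨ (∃ j, dd j = 2 ∧ ∀ i, i ≠ j → dd i = 0) := by
  by_cases hodd : ∃ j, Odd (dd j)
  · exact Or.inl hodd
  push_neg at hodd
  have heven : ∀ i, 2 ∣ dd i := by
    intro i
    have := hodd i
    rw [Nat.odd_iff] at this
    omega
  have hdvd : 2 ∣ ∑ i, dd i := Finset.dvd_sum fun i _ => heven i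
  have hcases : (∑ i, dd i) = 0 ∨ (∑ i, dd i) = 2 := by omega
  rcases hcases with h0 | h2
  · refine Or.inr (Or.inl fun i => ?_)
    exact (Finset.sum_eq_zero_iff.mp h0) i (Finset.mem_univ i)
  · right; right
    have hex : ∃ j, dd j ≠ 0 := by
      by_contra hall
      push_neg at hall
      rw [Finset.sum_eq_zero (fun i _ => hall i)] at h2
      omega
    obtain ⟨j, hj⟩ := hex
    have hle : dd j ≤ 2 := by
      rw [← h2]
      exact Finset.single_le_sum (fun i _ => Nat.zero_le _) (Finset.mem_univ j)
    have hj2 : dd j = 2 := by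
      have := heven j
      omega
    refine ⟨j, hj2, fun i hi => ?_⟩
    have hsplit : dd j + ∑ k ∈ Finset.univ.erase j, dd k = 2 := by
      rw [Finset.add_sum_erase _ _ (Finset.mem_univ j)]
      exact h2
    have hzero : ∑ k ∈ Finset.univ.erase j, dd k = 0 := by omega
    exact (Finset.sum_eq_zero_iff.mp hzero) i (Finset.mem_erase.mpr ⟨hi, Finset.mem_univ i⟩)

lemma continuous_mono {n : ℕ} (dd : Fin n → ℕ) :
    Continuous (fun x : EuclideanSpace ℝ (Fin n) => ∏ i, x i ^ dd i) := by
  apply continuous_finset_prod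
  intro i _
  exact ((continuous_apply i).comp (PiLp.continuous_ofLp (p := 2) (β := fun _ : Fin n => ℝ))).pow _

end EDAux
end

open EDAux in
/-- Every fully symmetric finite weighted set in `ℝⁿ \ {0}` (with positive weights)
is a Euclidean 3-design. -/
theorem fullySymmetric_isEuclideanDesign_three
    (n : ℕ) (hn : 3 ≤ n) (X : Finset (EuclideanSpace ℝ (Fin n)))
    (w : EuclideanSpace ℝ (Fin n) → ℝ)
    (hX0 : ∀ x ∈ X, x ≠ 0) (hw : ∀ x ∈ X, 0 < w x)
    (hsym : FullySymmetric n X w) :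
    IsEuclideanDesign n X w 3 := by
  intro f hdeg
  obtain ⟨m, rfl⟩ : ∃ m, n = m + 1 := ⟨n - 1, by omega⟩
  have hm : 2 ≤ m := by omega
  have hd : ((m + 1 : ℕ) : ℝ) - 1 = (m : ℝ) := by push_cast; ring
  set R := X.image (fun x => ‖x‖) with hR
  have hRpos : ∀ r ∈ R, 0 < r := by
    intro r hr
    rw [hR, Finset.mem_image] at hr
    obtain ⟨x, hx, rfl⟩ := hr
    exact norm_pos_iff.mpr (hX0 x hx)
  have hfin : ∀ r ∈ R, μH[((m + 1 : ℕ) : ℝ) - 1]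
      (sphere (0 : EuclideanSpace ℝ (Fin (m + 1))) r) ≠ ⊤ := by
    intro r hr; rw [hd]; exact sphere_hm_ne_top m r (hRpos r hr)
  have hne : ∀ r ∈ R, μH[((m + 1 : ℕ) : ℝ) - 1]
      (sphere (0 : EuclideanSpace ℝ (Fin (m + 1))) r) ≠ 0 := by
    intro r hr; rw [hd]; exact sphere_hm_ne_zero m r (hRpos r hr)
  set D := f.support with hD
  set c : (Fin (m + 1) →₀ ℕ) → ℝ := fun dd => f.coeff dd with hc
  set Φ : (Fin (m + 1) →₀ ℕ) → EuclideanSpace ℝ (Fin (m + 1)) → ℝ :=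
    fun dd x => ∏ i, x i ^ dd i with hΦ
  have heval : ∀ x : EuclideanSpace ℝ (Fin (m + 1)),
      MvPolynomial.eval (fun i => x i) f = ∑ dd ∈ D, c dd * Φ dd x := by
    intro x
    exact MvPolynomial.eval_eq' (fun i => x i) f
  -- degree bound for each monomial in the support
  have hdd3 : ∀ dd ∈ D, ∑ i, dd i ≤ 3 := by
    intro dd hdd
    have h1 : (dd.sum fun _ e => e) ≤ f.totalDegree := MvPolynomial.le_totalDegree hdd
    have h2 : dd.sum (fun _ e => e) = ∑ i, dd i :=
      Finsupp.sum_fintype dd _ (fun _ => rfl)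
    omega
  -- spherical average is linear in the monomials
  have havg : ∀ r ∈ R, sphereAvg (m + 1) r (fun x => MvPolynomial.eval (fun i => x i) f)
      = ∑ dd ∈ D, c dd * ⨍ x in sphere (0 : EuclideanSpace ℝ (Fin (m + 1))) r,
          Φ dd x ∂(μH[((m + 1 : ℕ) : ℝ) - 1]) := by
    intro r hr
    rw [sphereAvg]
    have h1 : ∀ x ∈ sphere (0 : EuclideanSpace ℝ (Fin (m + 1))) r,
        MvPolynomial.eval (fun i => x i) f = ∑ dd ∈ D, c dd * Φ dd x := fun x _ => heval x
    rw [setAverage_eq, setIntegral_congr_fun isClosed_sphere.measurableSet h1,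
      integral_finset_sum _ (fun dd _ =>
        ((integrableOn_sphere (hfin r hr) (continuous_mono (fun i => dd i))).const_mul (c dd)))]
    rw [smul_eq_mul, Finset.mul_sum]
    refine Finset.sum_congr rfl fun dd _ => ?_
    rw [integral_const_mul, setAverage_eq, smul_eq_mul]
    ring
  set A : (Fin (m + 1) →₀ ℕ) → ℝ → ℝ := fun dd r =>
    ⨍ x in sphere (0 : EuclideanSpace ℝ (Fin (m + 1))) r,
      Φ dd x ∂(μH[((m + 1 : ℕ) : ℝ) - 1]) with hA
  set W : ℝ → ℝ := fun r => ∑ x ∈ X.filter (fun x => ‖x‖ = r), w x with hW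
  have hLHS : ∑ r ∈ R, W r *
        sphereAvg (m + 1) r (fun x => MvPolynomial.eval (fun i => x i) f)
      = ∑ dd ∈ D, c dd * ∑ r ∈ R, W r * A dd r := by
    calc ∑ r ∈ R, W r * sphereAvg (m + 1) r (fun x => MvPolynomial.eval (fun i => x i) f)
        = ∑ r ∈ R, ∑ dd ∈ D, c dd * (W r * A dd r) := by
          refine Finset.sum_congr rfl fun r hr => ?_
          rw [havg r hr, Finset.mul_sum]
          exact Finset.sum_congr rfl fun dd _ => by ring
      _ = ∑ dd ∈ D, ∑ r ∈ R, c dd * (W r * A dd r) := Finset.sum_comm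
      _ = ∑ dd ∈ D, c dd * ∑ r ∈ R, W r * A dd r := by
          exact Finset.sum_congr rfl fun dd _ => (Finset.mul_sum _ _ _).symm
  have hRHS : ∑ x ∈ X, w x * MvPolynomial.eval (fun i => x i) f
      = ∑ dd ∈ D, c dd * ∑ x ∈ X, w x * Φ dd x := by
    calc ∑ x ∈ X, w x * MvPolynomial.eval (fun i => x i) f
        = ∑ x ∈ X, ∑ dd ∈ D, c dd * (w x * Φ dd x) := by
          refine Finset.sum_congr rfl fun x _ => ?_
          rw [heval x, Finset.mul_sum]
          exact Finset.sum_congr rfl fun dd _ => by ring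
      _ = ∑ dd ∈ D, ∑ x ∈ X, c dd * (w x * Φ dd x) := Finset.sum_comm
      _ = ∑ dd ∈ D, c dd * ∑ x ∈ X, w x * Φ dd x := by
          exact Finset.sum_congr rfl fun dd _ => (Finset.mul_sum _ _ _).symm
  rw [hLHS, hRHS]
  refine Finset.sum_congr rfl fun dd hdd => ?_
  congr 1
  -- key per-monomial identity
  rcases classify dd (hdd3 dd hdd) with ⟨j, hodd⟩ | hzero | ⟨j, hj2, hjz⟩
  · -- odd exponent: both sides vanish
    have hA0 : ∀ r ∈ R, A dd r = 0 := by
      intro r hr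
      rw [hA]
      show ⨍ x in sphere (0 : EuclideanSpace ℝ (Fin (m+1))) r, Φ dd x
        ∂(μH[((m + 1 : ℕ) : ℝ) - 1]) = 0
      rw [setAverage_eq, intOdd (fun i => dd i) j hodd, smul_zero]
    rw [Finset.sum_congr rfl fun r hr => by rw [hA0 r hr, mul_zero]]
    rw [Finset.sum_const, smul_zero]
    exact (sumX_odd hsym (fun i => dd i) j hodd).symm
  · -- constant monomial
    have hΦ1 : ∀ x : EuclideanSpace ℝ (Fin (m+1)), Φ dd x = 1 := by
      intro x
      exact Finset.prod_eq_one fun i _ => by rw [hzero i, pow_zero]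
    have hA1 : ∀ r ∈ R, A dd r = 1 := by
      intro r hr
      rw [hA]
      show ⨍ x in sphere (0 : EuclideanSpace ℝ (Fin (m+1))) r, Φ dd x
        ∂(μH[((m + 1 : ℕ) : ℝ) - 1]) = 1
      have : (fun x : EuclideanSpace ℝ (Fin (m+1)) => Φ dd x) = fun _ => (1:ℝ) := funext hΦ1
      rw [this]
      exact avgConst (hfin r hr) (hne r hr)
    rw [Finset.sum_congr rfl fun r hr => by rw [hA1 r hr, mul_one]]
    rw [Finset.sum_congr rfl (g := fun x => w x) fun x _ => by rw [hΦ1 x, mul_one]]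
    exact Finset.sum_fiberwise_of_maps_to (fun x hx => Finset.mem_image_of_mem _ hx) w
  · -- square of a coordinate
    have hΦsq : ∀ x : EuclideanSpace ℝ (Fin (m+1)), Φ dd x = (x j) ^ 2 := by
      intro x
      rw [hΦ]
      show ∏ i, x i ^ dd i = (x j) ^ 2
      rw [Finset.prod_eq_single j (fun i _ hij => by rw [hjz i hij, pow_zero])
        (fun h => absurd (Finset.mem_univ j) h), hj2]
    have hAsq : ∀ r ∈ R, A dd r = r ^ 2 / (m + 1) := by
      intro r hr
      rw [hA]
      show ⨍ x in sphere (0 : EuclideanSpace ℝ (Fin (m+1))) r, Φ dd x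
        ∂(μH[((m + 1 : ℕ) : ℝ) - 1]) = r ^ 2 / (m + 1)
      have : (fun x : EuclideanSpace ℝ (Fin (m+1)) => Φ dd x)
          = fun x => (x j) ^ 2 := funext hΦsq
      rw [this]
      have := avgSq (n := m + 1) (Nat.succ_ne_zero m) (hRpos r hr).le (hfin r hr) (hne r hr) j
      rw [this]
      push_cast
      ring
    -- LHS equals the weighted sum of ‖x‖²/(n)
    have hL : ∑ r ∈ R, W r * A dd r = ∑ x ∈ X, w x * (‖x‖ ^ 2 / ((m:ℝ) + 1)) := by
      calc ∑ r ∈ R, W r * A dd r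
          = ∑ r ∈ R, ∑ x ∈ X.filter (fun x => ‖x‖ = r), (w x * (‖x‖ ^ 2 / ((m:ℝ) + 1))) := by
            refine Finset.sum_congr rfl fun r hr => ?_
            rw [hAsq r hr, hW]
            rw [Finset.sum_mul]
            refine Finset.sum_congr rfl fun x hx => ?_
            rw [Finset.mem_filter] at hx
            rw [hx.2]
        _ = ∑ x ∈ X, w x * (‖x‖ ^ 2 / ((m:ℝ) + 1)) :=
            Finset.sum_fiberwise_of_maps_to (fun x hx => Finset.mem_image_of_mem _ hx) _
    rw [hL]
    -- symmetry: weighted sum of squares of each coordinate agree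
    have hsq : ∀ i : Fin (m+1), ∑ x ∈ X, w x * (x i) ^ 2 = ∑ x ∈ X, w x * (x j) ^ 2 :=
      fun i => sumX_swap hsym i j
    have hnormsum : ∑ x ∈ X, w x * ‖x‖ ^ 2 = (m + 1 : ℝ) * ∑ x ∈ X, w x * (x j) ^ 2 := by
      calc ∑ x ∈ X, w x * ‖x‖ ^ 2 = ∑ x ∈ X, ∑ i, w x * (x i) ^ 2 := by
            refine Finset.sum_congr rfl fun x _ => ?_
            rw [normsq x, Finset.mul_sum]
        _ = ∑ i, ∑ x ∈ X, w x * (x i) ^ 2 := Finset.sum_comm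
        _ = ∑ _i : Fin (m+1), ∑ x ∈ X, w x * (x j) ^ 2 :=
            Finset.sum_congr rfl fun i _ => hsq i
        _ = (m + 1 : ℝ) * ∑ x ∈ X, w x * (x j) ^ 2 := by
            rw [Finset.sum_const, nsmul_eq_mul, Finset.card_univ, Fintype.card_fin]
            push_cast
            ring
    have hm1 : ((m:ℝ) + 1) ≠ 0 := by positivity
    calc ∑ x ∈ X, w x * (‖x‖ ^ 2 / ((m:ℝ) + 1))
        = (∑ x ∈ X, w x * ‖x‖ ^ 2) / ((m:ℝ) + 1) := by
          rw [Finset.sum_div]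
          exact Finset.sum_congr rfl fun x _ => by ring
      _ = ∑ x ∈ X, w x * Φ dd x := by
          rw [hnormsum, mul_comm, mul_div_assoc, div_self hm1, mul_one]
          exact Finset.sum_congr rfl fun x _ => by rw [hΦsq x]
end

section
/- Let n be an integer and let 1 ≤ k_1 < k_2 < k_3 ≤ n be integers. Then Σ_{i=1,2,3} k_i · (n+2−3k_i) · (k_{i+1} − k_{i+2}) · G(k_{i+1}, k_{i+2}) = 0, where indices are taken mod 3 (k_4 = k_1, k_5 = k_2). -/
open MeasureTheory Metric
open scoped Classical

/-- `∑_{i=1,2,3} kᵢ(n+2-3kᵢ)(k_{i+1}-k_{i+2})G(k_{i+1},k_{i+2}) = 0` (indices mod 3). -/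
theorem sum_cyclic_G_eq_zero
    (n k₁ k₂ k₃ : ℤ) (h1 : 1 ≤ k₁) (h12 : k₁ < k₂) (h23 : k₂ < k₃) (h3n : k₃ ≤ n) :
    k₁ * (n + 2 - 3 * k₁) * (k₂ - k₃) * Gfun n k₂ k₃ +
      k₂ * (n + 2 - 3 * k₂) * (k₃ - k₁) * Gfun n k₃ k₁ +
      k₃ * (n + 2 - 3 * k₃) * (k₁ - k₂) * Gfun n k₁ k₂ = 0 := by
  unfold Gfun; ring
end

section
/- Let n ≥ 2 be an integer and let s ≥ 2 be an even integer. The real vector space of fully even homogeneous harmonic polynomials of degree s in n variables, i.e. polynomials f ∈ ℝ[x_1, …, x_n] that are homogeneous of degree s, satisfy Laplace's equation Σ_{i=1}^n ∂²f/∂x_i² = 0, and satisfy f(x_1, …, −x_i, …, x_n) = f(x_1, …, x_i, …, x_n) for every i (equivalently, every variable occurs only with even exponents in every monomial of f), has dimension C(n + s/2 − 2, n − 2). -/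
open MvPolynomial

noncomputable section

/-- The subspace of `ℝ[x₁,…,xₙ]` of fully even homogeneous harmonic polynomials of
degree `s`: polynomials that are homogeneous of degree `s`, satisfy Laplace's equation
`∑ i, ∂²f/∂xᵢ² = 0`, and are invariant under every sign change `xᵢ ↦ -xᵢ`. -/
def fullyEvenHarmonic (n s : ℕ) : Submodule ℝ (MvPolynomial (Fin n) ℝ) :=
  homogeneousSubmodule (Fin n) ℝ s ⊓
    LinearMap.ker
      (∑ i : Fin n,
        ((pderiv i).toLinearMap ∘ₗ (pderiv i).toLinearMap :
          MvPolynomial (Fin n) ℝ →ₗ[ℝ] MvPolynomial (Fin n) ℝ)) ⊓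
    ⨅ i : Fin n,
      LinearMap.ker
        ((aeval fun j : Fin n => if j = i then -X j else X j :
            MvPolynomial (Fin n) ℝ →ₐ[ℝ] MvPolynomial (Fin n) ℝ).toLinearMap -
          LinearMap.id)

end

set_option maxRecDepth 8000
set_option maxHeartbeats 1000000
set_option synthInstance.maxHeartbeats 400000
set_option linter.unusedSectionVars false

noncomputable section
namespace FEH

variable {n : ℕ}

abbrev MvP (n : ℕ) := MvPolynomial (Fin n) ℝ

def flipA (i : Fin n) : MvP n →ₐ[ℝ] MvP n :=
  aeval fun j : Fin n => if j = i then -X j else X j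

lemma flip_monomial (i : Fin n) (α : Fin n →₀ ℕ) (c : ℝ) :
    flipA i (monomial α c) = monomial α (((-1 : ℝ) ^ (α i)) * c) := by
  rw [flipA, aeval_monomial]
  have h : (α.prod fun j e => (if j = i then -X j else X j : MvP n) ^ e)
      = ((-1 : MvP n) ^ (α i)) * α.prod fun j e => (X j : MvP n) ^ e := by
    rw [Finsupp.prod, Finsupp.prod]
    have h1 : ∀ j ∈ α.support,
        (if j = i then -X j else X j : MvP n) ^ (α j)
          = (if j = i then ((-1 : MvP n) ^ (α j)) else 1) * (X j) ^ (α j) := by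
      intro j _
      split
      · rw [neg_pow]
      · rw [one_mul]
    rw [Finset.prod_congr rfl h1, Finset.prod_mul_distrib, Finset.prod_ite_eq']
    by_cases hi : i ∈ α.support
    · simp [hi]
    · have : α i = 0 := Finsupp.notMem_support_iff.mp hi
      simp [hi, this]
  rw [h, monomial_eq, algebraMap_eq]
  have hC : (C ((-1:ℝ)^(α i) * c) : MvP n) = (-1 : MvP n)^(α i) * C c := by
    rw [map_mul, map_pow, map_neg, map_one]
  rw [hC]
  ring

lemma coeff_flip (i : Fin n) (p : MvP n) (β : Fin n →₀ ℕ) :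
    coeff β (flipA i p) = (-1 : ℝ) ^ (β i) * coeff β p := by
  induction p using MvPolynomial.induction_on' with
  | monomial α c =>
    rw [flip_monomial, coeff_monomial, coeff_monomial]
    split
    · next h => subst h; rfl
    · rw [mul_zero]
  | add p q hp hq => rw [map_add, coeff_add, coeff_add, hp, hq]; ring

def Ksub (n : ℕ) : Submodule ℝ (MvP n) :=
  ⨅ i : Fin n, LinearMap.ker ((flipA i).toLinearMap - LinearMap.id)

lemma mem_K_iff {p : MvP n} :
    p ∈ Ksub n ↔ ∀ β : Fin n →₀ ℕ, coeff β p ≠ 0 → ∀ i, Even (β i) := by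
  have h : p ∈ Ksub n ↔ ∀ i, flipA i p = p := by
    simp [Ksub, Submodule.mem_iInf, LinearMap.mem_ker, LinearMap.sub_apply, sub_eq_zero]
  rw [h]
  constructor
  · intro h β hβ i
    have h2 := congrArg (coeff β) (h i)
    rw [coeff_flip] at h2
    by_contra hodd
    rw [(Nat.not_even_iff_odd.mp hodd).neg_one_pow] at h2
    apply hβ; linarith
  · intro h i
    apply MvPolynomial.ext
    intro β
    rw [coeff_flip]
    rcases eq_or_ne (coeff β p) 0 with h0 | h0
    · rw [h0, mul_zero]
    · rw [(h β h0 i).neg_one_pow, one_mul]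

def Esub (n d : ℕ) : Submodule ℝ (MvP n) :=
  homogeneousSubmodule (Fin n) ℝ d ⊓ Ksub n

lemma K_eq : Ksub n = AddMonoidAlgebra.supported ℝ ℝ {β : Fin n →₀ ℕ | ∀ i, Even (β i)} := by
  ext p
  rw [AddMonoidAlgebra.mem_supported, mem_K_iff]
  constructor
  · intro h x hx
    exact h x (MvPolynomial.mem_support_iff.mp hx)
  · intro h β hβ
    exact h (MvPolynomial.mem_support_iff.mpr hβ)

lemma E_eq (d : ℕ) :
    Esub n d = AddMonoidAlgebra.supported ℝ ℝ
      {β : Fin n →₀ ℕ | β.degree = d ∧ ∀ i, Even (β i)} := by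
  rw [Esub, K_eq, homogeneousSubmodule_eq_finsupp_supported]
  simp only [AddMonoidAlgebra.supported, ← Submodule.comap_inf, ← Finsupp.supported_inter]
  congr 1

lemma mem_E_iff {d : ℕ} {p : MvP n} :
    p ∈ Esub n d ↔ ∀ β : Fin n →₀ ℕ, coeff β p ≠ 0 → β.degree = d ∧ ∀ i, Even (β i) := by
  rw [E_eq, AddMonoidAlgebra.mem_supported]
  constructor
  · intro h β hβ
    exact h (MvPolynomial.mem_support_iff.mpr hβ)
  · intro h x hx
    exact h x (MvPolynomial.mem_support_iff.mp hx)

lemma monomial_mem_E {d : ℕ} {α : Fin n →₀ ℕ} (hd : α.degree = d)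
    (he : ∀ i, Even (α i)) (c : ℝ) : monomial α c ∈ Esub n d := by
  rw [mem_E_iff]
  intro β hβ
  rw [coeff_monomial] at hβ
  rcases eq_or_ne α β with h | h
  · subst h; exact ⟨hd, he⟩
  · simp [h] at hβ

lemma degree_add (a b : Fin n →₀ ℕ) : (a + b).degree = a.degree + b.degree := by
  simp only [Finsupp.degree_eq_weight_one]
  exact map_add _ a b

lemma degree_single (i : Fin n) (m : ℕ) : (Finsupp.single i m).degree = m := by
  rcases eq_or_ne m 0 with h | h
  · simp [h]
  · exact Finsupp.degree_single i m

lemma finrank_E (n k : ℕ) :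
    Module.finrank ℝ (Esub n (2 * k)) = (n + k - 1).choose k := by
  classical
  set S : Set (Fin n →₀ ℕ) := {β | β.degree = 2 * k ∧ ∀ i, Even (β i)} with hS
  have hfin : S.Finite :=
    (Finsupp.finite_of_degree_le (2 * k)).subset (fun β hβ => le_of_eq hβ.1)
  haveI := hfin.fintype
  have e1 : Esub n (2 * k) ≃ₗ[ℝ] (S →₀ ℝ) :=
    (LinearEquiv.ofEq _ _ (E_eq (2 * k))).trans (AddMonoidAlgebra.supportedEquivFinsupp S)
  rw [e1.finrank_eq, Module.finrank_finsupp_self]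
  -- card S = (n + k - 1).choose k
  have e2 : {β : Fin n →₀ ℕ // β.degree = k} ≃ S := by
    apply Equiv.ofBijective (fun β => ⟨β.1 + β.1, by
      constructor
      · rw [degree_add, β.2]; ring
      · intro i; exact ⟨β.1 i, (Finsupp.add_apply _ _ _).symm⟩⟩)
    constructor
    · rintro ⟨β, hβ⟩ ⟨γ, hγ⟩ h
      have h' : β + β = γ + γ := congrArg Subtype.val h
      apply Subtype.ext
      ext i
      have := DFunLike.congr_fun h' i
      change β i + β i = γ i + γ i at this
      show β i = γ i
      omega
    · rintro ⟨α, hdeg, hev⟩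
      have hββ : α.mapRange (· / 2) (by simp) + α.mapRange (· / 2) (by simp) = α := by
        ext i
        obtain ⟨t, ht⟩ := hev i
        simp only [Finsupp.add_apply, Finsupp.mapRange_apply, ht]
        omega
      refine ⟨⟨α.mapRange (· / 2) (by simp), ?_⟩, Subtype.ext hββ⟩
      have := congrArg Finsupp.degree hββ
      rw [degree_add, hdeg] at this
      omega
  have e3 : Sym (Fin n) k ≃ {β : Fin n →₀ ℕ // β.degree = k} :=
    (Sym.equivNatSum (Fin n) k).trans
      (Equiv.subtypeEquivRight (fun P => by simp [Finsupp.degree_apply, Finsupp.sum]))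
  rw [← Fintype.card_congr (e3.trans e2), Sym.card_sym_eq_choose, Fintype.card_fin]

lemma mapped_mem {T : MvP n →ₗ[ℝ] MvP n} {d e : ℕ}
    (hT : ∀ (α : Fin n →₀ ℕ) (c : ℝ), α.degree = d → (∀ i, Even (α i)) →
      T (monomial α c) ∈ Esub n e) :
    ∀ p ∈ Esub n d, T p ∈ Esub n e := by
  intro p hp
  rw [p.as_sum, map_sum]
  refine Submodule.sum_mem _ fun v hv => ?_
  obtain ⟨h1, h2⟩ := mem_E_iff.mp hp v (MvPolynomial.mem_support_iff.mp hv)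
  exact hT v _ h1 h2

lemma pd2_monomial (i : Fin n) (α : Fin n →₀ ℕ) (c : ℝ) :
    pderiv i (pderiv i (monomial α c)) =
      monomial (α - Finsupp.single i 1 - Finsupp.single i 1)
        (c * (α i : ℝ) * ((α i - 1 : ℕ) : ℝ)) := by
  rw [pderiv_monomial, pderiv_monomial]
  have h : (α - Finsupp.single i 1 : Fin n →₀ ℕ) i = α i - 1 := by
    simp [Finsupp.tsub_apply]
  rw [h]

lemma sq_mem (i : Fin n) (d : ℕ) :
    ∀ p ∈ Esub n d, pderiv i (pderiv i p) ∈ Esub n (d - 2) := by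
  have : ((pderiv i).toLinearMap ∘ₗ (pderiv i).toLinearMap :
      MvP n →ₗ[ℝ] MvP n) = ((pderiv i).toLinearMap.comp (pderiv i).toLinearMap) := rfl
  refine mapped_mem (T := (pderiv i).toLinearMap ∘ₗ (pderiv i).toLinearMap) ?_
  intro α c hd he
  have hcalc : ((pderiv i).toLinearMap ∘ₗ (pderiv i).toLinearMap) (monomial α c)
      = pderiv i (pderiv i (monomial α c)) := rfl
  rw [hcalc, pd2_monomial]
  rcases eq_or_ne (α i) 0 with h0 | h0
  · rw [h0]
    norm_num
  · obtain ⟨t, ht⟩ := he i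
    have h2 : 2 ≤ α i := by omega
    have key : α - Finsupp.single i 1 - Finsupp.single i 1 + Finsupp.single i 2 = α := by
      ext j
      rcases eq_or_ne j i with h | h
      · subst h
        simp only [Finsupp.add_apply, Finsupp.tsub_apply, Finsupp.single_eq_same]
        omega
      · simp only [Finsupp.add_apply, Finsupp.tsub_apply,
          Finsupp.single_eq_of_ne' (Ne.symm h)]
        omega
    have hdeg : (α - Finsupp.single i 1 - Finsupp.single i 1).degree = d - 2 := by
      have := congrArg Finsupp.degree key
      rw [degree_add, degree_single, hd] at this
      omega
    have heven : ∀ j, Even ((α - Finsupp.single i 1 - Finsupp.single i 1 : Fin n →₀ ℕ) j) := by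
      intro j
      rcases eq_or_ne j i with h | h
      · subst h
        simp only [Finsupp.tsub_apply, Finsupp.single_eq_same]
        exact ⟨t - 1, by omega⟩
      · simp only [Finsupp.tsub_apply, Finsupp.single_eq_of_ne' (Ne.symm h), Nat.sub_zero]
        exact he j
    exact monomial_mem_E hdeg heven _

variable {n : ℕ} [NeZero n]

/-- Double "integration" with respect to `x₀`. -/
def Iop (n : ℕ) [NeZero n] : MvP n →ₗ[ℝ] MvP n :=
  (Finsupp.lsum ℝ fun α : Fin n →₀ ℕ =>
    (((α 0 + 1) * (α 0 + 2) : ℝ))⁻¹ • (monomial (α + Finsupp.single 0 2) : ℝ →ₗ[ℝ] MvP n))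
  ∘ₗ (AddMonoidAlgebra.coeffLinearEquiv ℝ).toLinearMap

lemma Iop_monomial (α : Fin n →₀ ℕ) (c : ℝ) :
    Iop n (monomial α c) =
      monomial (α + Finsupp.single 0 2) ((((α 0 + 1) * (α 0 + 2) : ℝ))⁻¹ * c) := by
  rw [Iop, ← single_eq_monomial, LinearMap.comp_apply, LinearEquiv.coe_coe,
    AddMonoidAlgebra.coeffLinearEquiv_apply, AddMonoidAlgebra.coeff_single]
  refine (Finsupp.lsum_single _ _ _ _).trans ?_
  rw [LinearMap.smul_apply, smul_monomial, smul_eq_mul]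

lemma P0I (p : MvP n) : pderiv 0 (pderiv 0 (Iop n p)) = p := by
  induction p using MvPolynomial.induction_on' with
  | add p q hp hq => rw [map_add, map_add, map_add, hp, hq]
  | monomial α c =>
    rw [Iop_monomial, pderiv_monomial, pderiv_monomial]
    have h1 : (α + Finsupp.single 0 2 : Fin n →₀ ℕ) 0 = α 0 + 2 := by
      simp [Finsupp.add_apply]
    have h2 : (α + Finsupp.single 0 2 - Finsupp.single 0 1 : Fin n →₀ ℕ) 0 = α 0 + 1 := by
      simp [Finsupp.tsub_apply, Finsupp.add_apply]
    have h3 : α + Finsupp.single 0 2 - Finsupp.single 0 1 - Finsupp.single 0 1 = α := by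
      ext j
      rcases eq_or_ne j 0 with h | h
      · subst h
        simp only [Finsupp.tsub_apply, Finsupp.add_apply, Finsupp.single_eq_same]
        omega
      · simp only [Finsupp.tsub_apply, Finsupp.add_apply,
          Finsupp.single_eq_of_ne' (Ne.symm h)]
        omega
    rw [h1, h2, h3]
    congr 1
    have hne1 : ((α 0 : ℝ) + 1) ≠ 0 := by positivity
    have hne2 : ((α 0 : ℝ) + 2) ≠ 0 := by positivity
    push_cast
    field_simp

lemma pderiv_Iop_comm {i : Fin n} (hi : i ≠ 0) (p : MvP n) :
    pderiv i (Iop n p) = Iop n (pderiv i p) := by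
  induction p using MvPolynomial.induction_on' with
  | add p q hp hq => simp only [map_add, hp, hq]
  | monomial α c =>
    rw [Iop_monomial, pderiv_monomial, pderiv_monomial, Iop_monomial]
    have h1 : (α + Finsupp.single 0 2 : Fin n →₀ ℕ) i = α i := by
      simp [Finsupp.add_apply, Finsupp.single_eq_of_ne' (Ne.symm hi)]
    have h2 : (α - Finsupp.single i 1 : Fin n →₀ ℕ) 0 = α 0 := by
      simp [Finsupp.tsub_apply, Finsupp.single_eq_of_ne' hi]
    have h3 : α + Finsupp.single 0 2 - Finsupp.single i 1
        = α - Finsupp.single i 1 + Finsupp.single 0 2 := by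
      ext j
      rcases eq_or_ne j 0 with h | h
      · subst h
        simp only [Finsupp.tsub_apply, Finsupp.add_apply, Finsupp.single_eq_same,
          Finsupp.single_eq_of_ne' hi]
        omega
      · rcases eq_or_ne j i with h' | h'
        · subst h'
          simp only [Finsupp.tsub_apply, Finsupp.add_apply, Finsupp.single_eq_same,
            Finsupp.single_eq_of_ne' (Ne.symm h)]
          omega
        · simp only [Finsupp.tsub_apply, Finsupp.add_apply,
            Finsupp.single_eq_of_ne' (Ne.symm h), Finsupp.single_eq_of_ne' (Ne.symm h')]
          omega
    rw [h1, h2, h3]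
    congr 1
    ring

lemma Iop_mem (d : ℕ) : ∀ p ∈ Esub n d, Iop n p ∈ Esub n (d + 2) := by
  refine mapped_mem ?_
  intro α c hd he
  rw [Iop_monomial]
  refine monomial_mem_E ?_ ?_ _
  · rw [degree_add, degree_single, hd]
  · intro j
    rcases eq_or_ne j 0 with h | h
    · subst h
      simp only [Finsupp.add_apply, Finsupp.single_eq_same]
      obtain ⟨t, ht⟩ := he 0
      exact ⟨t + 1, by omega⟩
    · simp only [Finsupp.add_apply, Finsupp.single_eq_of_ne' (Ne.symm h), Nat.add_zero]
      exact he j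

/-- The Laplacian. -/
def lap (n : ℕ) : MvP n →ₗ[ℝ] MvP n :=
  ∑ i : Fin n,
    ((pderiv i).toLinearMap ∘ₗ (pderiv i).toLinearMap : MvP n →ₗ[ℝ] MvP n)

/-- The tail of the Laplacian (all variables except `x₀`). -/
def Dop (n : ℕ) [NeZero n] : MvP n →ₗ[ℝ] MvP n :=
  ∑ i ∈ Finset.univ.erase (0 : Fin n),
    ((pderiv i).toLinearMap ∘ₗ (pderiv i).toLinearMap : MvP n →ₗ[ℝ] MvP n)

lemma lap_eq : lap n = ((pderiv (0 : Fin n)).toLinearMap ∘ₗ (pderiv 0).toLinearMap) + Dop n := by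
  rw [lap, Dop, ← Finset.add_sum_erase _ _ (Finset.mem_univ (0 : Fin n))]

lemma lap_mem (d : ℕ) : ∀ p ∈ Esub n d, lap n p ∈ Esub n (d - 2) := by
  intro p hp
  rw [lap, LinearMap.sum_apply]
  exact Submodule.sum_mem _ fun i _ => sq_mem i d p hp

lemma Dop_mem (d : ℕ) : ∀ p ∈ Esub n d, Dop n p ∈ Esub n (d - 2) := by
  intro p hp
  rw [Dop, LinearMap.sum_apply]
  exact Submodule.sum_mem _ fun i _ => sq_mem i d p hp

lemma Dop_Iop_comm (p : MvP n) : Dop n (Iop n p) = Iop n (Dop n p) := by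
  rw [Dop, LinearMap.sum_apply, LinearMap.sum_apply, map_sum]
  refine Finset.sum_congr rfl fun i hi => ?_
  have hi0 : i ≠ 0 := Finset.ne_of_mem_erase hi
  simp only [LinearMap.comp_apply, Derivation.coeFn_coe]
  rw [pderiv_Iop_comm hi0, pderiv_Iop_comm hi0]

lemma Dop_zero {p : MvP n} (hp : p ∈ Esub n 0) : Dop n p = 0 := by
  have hmono : p = monomial 0 (coeff 0 p) := by
    apply MvPolynomial.ext
    intro β
    rcases eq_or_ne β 0 with h | h
    · subst h; rw [coeff_monomial, if_pos rfl]
    · rw [coeff_monomial, if_neg (by exact fun hh => h hh.symm)]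
      by_contra hc
      exact h (Finsupp.degree_eq_zero_iff β |>.mp (mem_E_iff.mp hp β hc).1)
  rw [hmono, Dop, LinearMap.sum_apply]
  refine Finset.sum_eq_zero fun i _ => ?_
  simp only [LinearMap.comp_apply, Derivation.coeFn_coe]
  rw [pderiv_monomial]
  simp

lemma Dop_pow_mem (j : ℕ) : ∀ (a : ℕ), ∀ p ∈ Esub n (2 * (j + a)), (Dop n ^ j) p ∈ Esub n (2 * a) := by
  induction j with
  | zero => intro a p hp; simpa using hp
  | succ j ih =>
    intro a p hp
    rw [pow_succ, Module.End.mul_apply]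
    have h1 : Dop n p ∈ Esub n (2 * (j + a)) := by
      have := Dop_mem (2 * (j + 1 + a)) p hp
      have he : 2 * (j + 1 + a) - 2 = 2 * (j + a) := by omega
      rwa [he] at this
    exact ih a _ h1

lemma Dop_pow_zero (a : ℕ) : ∀ p ∈ Esub n (2 * a), (Dop n ^ (a + 1)) p = 0 := by
  intro p hp
  rw [pow_succ', Module.End.mul_apply]
  have hp' : p ∈ Esub n (2 * (a + 0)) := by rw [Nat.add_zero]; exact hp
  have h0 : (Dop n ^ a) p ∈ Esub n 0 := by
    have := Dop_pow_mem a 0 p hp'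
    rwa [Nat.mul_zero] at this
  exact Dop_zero h0

lemma Iop_pow_mem (m : ℕ) : ∀ (d : ℕ), ∀ p ∈ Esub n d, (Iop n ^ m) p ∈ Esub n (d + 2 * m) := by
  induction m with
  | zero => intro d p hp; simpa using hp
  | succ m ih =>
    intro d p hp
    rw [pow_succ', Module.End.mul_apply]
    have := Iop_mem (d + 2 * m) _ (ih d p hp)
    have he : d + 2 * m + 2 = d + 2 * (m + 1) := by omega
    rwa [he] at this

lemma Dop_Iop_pow_comm (m : ℕ) (p : MvP n) : Dop n ((Iop n ^ m) p) = (Iop n ^ m) (Dop n p) := by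
  induction m with
  | zero => simp
  | succ m ih =>
    rw [pow_succ', Module.End.mul_apply, Dop_Iop_comm, ih, Module.End.mul_apply]

lemma lap_surj (m : ℕ) (g : MvP n) (hg : g ∈ Esub n (2 * m)) :
    ∃ f ∈ Esub n (2 * m + 2), lap n f = g := by
  set w : ℕ → MvP n := fun j => (Iop n ^ j) ((Dop n ^ j) g) with hw
  refine ⟨∑ j ∈ Finset.range (m + 1), ((-1 : ℝ) ^ j) • (Iop n ^ (j + 1)) ((Dop n ^ j) g), ?_, ?_⟩
  · refine Submodule.sum_mem _ fun j hj => Submodule.smul_mem _ _ ?_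
    have hj' : j ≤ m := by simpa using Nat.lt_succ_iff.mp (Finset.mem_range.mp hj)
    have h1 : (Dop n ^ j) g ∈ Esub n (2 * (m - j)) := by
      refine Dop_pow_mem j (m - j) g ?_
      have : 2 * (j + (m - j)) = 2 * m := by omega
      rwa [this]
    have h2 := Iop_pow_mem (j + 1) _ _ h1
    have he : 2 * (m - j) + 2 * (j + 1) = 2 * m + 2 := by omega
    rwa [he] at h2
  · set u : ℕ → MvP n := fun j => ((-1 : ℝ) ^ j) • w j with hu
    rw [lap_eq, LinearMap.add_apply, map_sum, map_sum, ← Finset.sum_add_distrib]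
    have hterm : ∀ j ∈ Finset.range (m + 1),
        ((pderiv (0 : Fin n)).toLinearMap ∘ₗ (pderiv 0).toLinearMap)
            (((-1 : ℝ) ^ j) • (Iop n ^ (j + 1)) ((Dop n ^ j) g))
          + Dop n (((-1 : ℝ) ^ j) • (Iop n ^ (j + 1)) ((Dop n ^ j) g))
          = u j - u (j + 1) := by
      intro j _
      rw [map_smul, map_smul]
      have hP : ((pderiv (0 : Fin n)).toLinearMap ∘ₗ (pderiv 0).toLinearMap)
          ((Iop n ^ (j + 1)) ((Dop n ^ j) g)) = w j := by
        rw [pow_succ', Module.End.mul_apply]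
        show pderiv 0 (pderiv 0 (Iop n ((Iop n ^ j) ((Dop n ^ j) g)))) = w j
        rw [P0I]
      have hD : Dop n ((Iop n ^ (j + 1)) ((Dop n ^ j) g)) = w (j + 1) := by
        rw [Dop_Iop_pow_comm, hw,
          show Dop n ((Dop n ^ j) g) = (Dop n ^ (j + 1)) g from by
            rw [pow_succ', Module.End.mul_apply]]
      rw [hP, hD]
      have hneg : u (j + 1) = -(((-1 : ℝ) ^ j) • w (j + 1)) := by
        rw [hu]
        show ((-1 : ℝ) ^ (j + 1)) • w (j + 1) = _
        rw [pow_succ, mul_smul]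
        simp
      rw [hneg, sub_neg_eq_add, hu]
    rw [Finset.sum_congr rfl hterm, Finset.sum_range_sub' u]
    have hu0 : u 0 = g := by
      rw [hu]
      show ((-1 : ℝ) ^ 0) • (Iop n ^ 0) ((Dop n ^ 0) g) = g
      simp
    have hum : u (m + 1) = 0 := by
      rw [hu]
      show ((-1 : ℝ) ^ (m + 1)) • (Iop n ^ (m + 1)) ((Dop n ^ (m + 1)) g) = 0
      rw [Dop_pow_zero m g hg, map_zero, smul_zero]
    rw [hu0, hum, sub_zero]

lemma E_fd (n d : ℕ) : FiniteDimensional ℝ (Esub n d) := by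
  classical
  set S : Set (Fin n →₀ ℕ) := {β | β.degree = d ∧ ∀ i, Even (β i)} with hS
  have hfin : S.Finite :=
    (Finsupp.finite_of_degree_le d).subset (fun β hβ => le_of_eq hβ.1)
  haveI := hfin.fintype
  have e1 : Esub n d ≃ₗ[ℝ] (S →₀ ℝ) :=
    (LinearEquiv.ofEq _ _ (E_eq d)).trans (AddMonoidAlgebra.supportedEquivFinsupp S)
  exact Module.Finite.equiv e1.symm

lemma feh_eq (n s : ℕ) :
    fullyEvenHarmonic n s = Esub n s ⊓ LinearMap.ker (lap n) := by
  rw [fullyEvenHarmonic, inf_right_comm]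
  rfl

end FEH

end

open FEH in
/-- The space of fully even homogeneous harmonic polynomials of even degree `s ≥ 2` in
`n ≥ 2` variables has dimension `C(n + s/2 - 2, n - 2)`. -/
theorem finrank_fullyEvenHarmonic (n s : ℕ) (hn : 2 ≤ n) (hs : 2 ≤ s) (hse : Even s) :
    Module.finrank ℝ (fullyEvenHarmonic n s) = (n + s / 2 - 2).choose (n - 2) := by
  haveI : NeZero n := ⟨by omega⟩
  obtain ⟨t, ht⟩ := hse
  obtain ⟨a, ha⟩ : ∃ a, t = a + 1 := ⟨t - 1, by omega⟩
  obtain ⟨b, hb⟩ : ∃ b, n = b + 2 := ⟨n - 2, by omega⟩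
  have hsk : s = 2 * (a + 1) := by omega
  have hs2 : s - 2 = 2 * a := by omega
  haveI fd1 : FiniteDimensional ℝ (Esub n s) := E_fd n s
  haveI fd2 : FiniteDimensional ℝ (Esub n (s - 2)) := E_fd n (s - 2)
  have hmap : ∀ x ∈ Esub n s, lap n x ∈ Esub n (s - 2) := lap_mem s
  set L' := (lap n).restrict hmap with hL'
  have hsurj : Function.Surjective L' := by
    rintro ⟨y, hy⟩
    obtain ⟨f, hf, hlap⟩ := lap_surj a y (by rwa [← hs2])
    have hf' : f ∈ Esub n s := by rwa [show 2 * a + 2 = s by omega] at hf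
    exact ⟨⟨f, hf'⟩, Subtype.ext hlap⟩
  have hrange : LinearMap.range L' = ⊤ := LinearMap.range_eq_top.mpr hsurj
  have hrank := LinearMap.finrank_range_add_finrank_ker L'
  rw [hrange, finrank_top] at hrank
  -- identify the kernel with fullyEvenHarmonic
  have hker : LinearMap.ker L' =
      Submodule.comap (Esub n s).subtype (Esub n s ⊓ LinearMap.ker (lap n)) := by
    have hkr := LinearMap.ker_restrict (f := lap n) (p := Esub n s) (q := Esub n (s - 2)) hmap
    rw [hL', hkr, Submodule.comap_inf, Submodule.comap_subtype_self, top_inf_eq]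
  have e2 : LinearMap.ker L' ≃ₗ[ℝ] fullyEvenHarmonic n s := by
    rw [feh_eq]
    exact (LinearEquiv.ofEq _ _ hker).trans
      (Submodule.comapSubtypeEquivOfLe inf_le_left)
  have hfr : Module.finrank ℝ (fullyEvenHarmonic n s)
      = Module.finrank ℝ (LinearMap.ker L') := e2.symm.finrank_eq
  rw [hfr]
  have h1 : Module.finrank ℝ (Esub n s) = (n + (a + 1) - 1).choose (a + 1) := by
    rw [hsk]; exact finrank_E n (a + 1)
  have h2 : Module.finrank ℝ (Esub n (s - 2)) = (n + a - 1).choose a := by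
    rw [hs2]; exact finrank_E n a
  rw [h1, h2] at hrank
  have hA : n + (a + 1) - 1 = a + b + 2 := by omega
  have hB : n + a - 1 = a + b + 1 := by omega
  rw [hA, hB] at hrank
  have hpascal : (a + b + 2).choose (a + 1)
      = (a + b + 1).choose a + (a + b + 1).choose (a + 1) := by
    exact Nat.choose_succ_succ (a + b + 1) a
  have hsymm : (a + b + 1).choose (a + 1) = (a + b + 1).choose b := by
    have := Nat.choose_symm (show a + 1 ≤ a + b + 1 by omega)
    rw [show a + b + 1 - (a + 1) = b by omega] at this
    exact this.symm
  have hgoal : (n + s / 2 - 2).choose (n - 2) = (a + b + 1).choose b := by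
    have hx : n + s / 2 - 2 = a + b + 1 := by omega
    have hy : n - 2 = b := by omega
    rw [hx, hy]
  rw [hgoal]
  omega
end
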